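/- Let H be a finite abelian group (written multiplicatively) and let q : ℕ → H → ℝ[x,x⁻¹] be such that each q_{j,g} has nonnegative coefficients, Σ_{g∈H} q_{j,g}(1) = 1 for every j, and q_{j,g} = q_{j,g⁻¹} for all j and g (the symmetric case). Suppose that for every maximal proper subgroup K of H the series Σ_j (Σ_{g ∈ H : g² ∉ K} q_{j,g}(1)) diverges. Then the sequence is hollow: for every character α ≠ 1 of H and every j₀ ≥ 0, the l¹ norms ‖∏_{j=j₀}^{j₀+d} p_{α,j}‖₁ tend to 0 as d → ∞, where p_{α,j} := Σ_{g∈H} α(g⁻¹)·q_{j,g} ∈ ℂ[x,x⁻¹]. -/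

import Mathlib

/-!
By the symmetry `q_{j,g} = q_{j,g⁻¹}` the factor `∑_g α(g⁻¹) q_{j,g}` equals
`∑_g Re α(g) · q_{j,g}`, so its l¹ norm is at most `∑_g |Re α(g)| q_{j,g}(1)`. Pick a maximal
subgroup `K ⊇ ker α`. If `g² ∉ K` then `α(g)² ≠ 1`, so the unimodular `α(g)` is not real and
`|Re α(g)| ≤ δ` for a uniform `δ < 1`. Each factor therefore has norm at most
`1 - (1 - δ) s_j ≤ exp (-(1 - δ) s_j)` with `s_j = ∑_{g² ∉ K} q_{j,g}(1)`; since the l¹ norm is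
submultiplicative and `∑ s_j = ∞`, the products tend to `0`.
-/

open Finsupp Filter

/-- The coefficients of a real Laurent polynomial. -/
def lcoeff (p : AddMonoidAlgebra ℝ ℤ) : ℤ →₀ ℝ := p.coeff

/-- The coefficients of a complex Laurent polynomial. -/
def lcoeffC (p : AddMonoidAlgebra ℂ ℤ) : ℤ →₀ ℂ := p.coeff

/-- The `l¹` norm of a complex Laurent polynomial. -/
noncomputable def l1C (p : AddMonoidAlgebra ℂ ℤ) : ℝ := (lcoeffC p).sum fun _ c => ‖c‖

/-- Evaluation of a real Laurent polynomial at `x = 1`. -/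
noncomputable def ev1 (p : AddMonoidAlgebra ℝ ℤ) : ℝ := (lcoeff p).sum fun _ c => c

/-- A real Laurent polynomial viewed as a complex Laurent polynomial. -/
noncomputable def toC (p : AddMonoidAlgebra ℝ ℤ) : AddMonoidAlgebra ℂ ℤ :=
  AddMonoidAlgebra.ofCoeff (Finsupp.mapRange (fun r : ℝ => (r : ℂ)) Complex.ofReal_zero (lcoeff p))

open Finset Real ComplexConjugate

lemma l1C_eq_sum (p : AddMonoidAlgebra ℂ ℤ) {t : Finset ℤ} (h : p.coeff.support ⊆ t) :
    l1C p = ∑ m ∈ t, ‖p.coeff m‖ :=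
  Finset.sum_subset h fun m _ hm => by simp [Finsupp.notMem_support_iff.mp hm]

lemma l1C_nonneg (p : AddMonoidAlgebra ℂ ℤ) : 0 ≤ l1C p :=
  Finset.sum_nonneg fun _ _ => norm_nonneg _

lemma l1C_add_le (p r : AddMonoidAlgebra ℂ ℤ) : l1C (p + r) ≤ l1C p + l1C r := by
  rw [l1C_eq_sum (p + r) Finsupp.support_add, l1C_eq_sum p subset_union_left,
    l1C_eq_sum r subset_union_right, ← sum_add_distrib]
  exact sum_le_sum fun m _ => norm_add_le _ _

lemma l1C_sum_le {ι : Type*} (s : Finset ι) (f : ι → AddMonoidAlgebra ℂ ℤ) :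
    l1C (∑ i ∈ s, f i) ≤ ∑ i ∈ s, l1C (f i) :=
  le_sum_of_subadditive l1C (by simp [l1C, lcoeffC]) l1C_add_le s f

lemma l1C_smul (c : ℂ) (p : AddMonoidAlgebra ℂ ℤ) : l1C (c • p) = ‖c‖ * l1C p := by
  rw [l1C_eq_sum (c • p) (t := p.coeff.support) Finsupp.support_smul,
    l1C_eq_sum p subset_rfl, Finset.mul_sum]
  simp only [AddMonoidAlgebra.coeff_smul, Finsupp.smul_apply, smul_eq_mul, norm_mul]

lemma l1C_single (a : ℤ) (c : ℂ) : l1C (AddMonoidAlgebra.single a c) = ‖c‖ :=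
  Finsupp.sum_single_index norm_zero

lemma l1C_mul_le (p r : AddMonoidAlgebra ℂ ℤ) : l1C (p * r) ≤ l1C p * l1C r := by
  rw [AddMonoidAlgebra.mul_def, l1C_eq_sum p subset_rfl, l1C_eq_sum r subset_rfl, sum_mul_sum]
  refine (l1C_sum_le _ _).trans (sum_le_sum fun a _ => (l1C_sum_le _ _).trans_eq ?_)
  exact sum_congr rfl fun b _ => by rw [l1C_single, norm_mul]

lemma l1C_prod_le {ι : Type*} (s : Finset ι) (f : ι → AddMonoidAlgebra ℂ ℤ) :
    l1C (∏ i ∈ s, f i) ≤ ∏ i ∈ s, l1C (f i) :=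
  le_prod_of_submultiplicative_of_nonneg l1C l1C_nonneg ((l1C_single 0 1).trans norm_one).le
    l1C_mul_le s f

lemma ev1_nonneg {p : AddMonoidAlgebra ℝ ℤ} (hp : ∀ m, 0 ≤ lcoeff p m) : 0 ≤ ev1 p :=
  Finsupp.sum_nonneg fun m _ => hp m

lemma l1C_toC {p : AddMonoidAlgebra ℝ ℤ} (hp : ∀ m, 0 ≤ lcoeff p m) : l1C (toC p) = ev1 p := by
  rw [l1C_eq_sum (toC p) (Finsupp.support_mapRange (hf := Complex.ofReal_zero)), ev1]
  exact sum_congr rfl fun m _ => by simp [toC, abs_of_nonneg (hp m)]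

namespace MonoidHom

variable {G : Type*} [Group G] [Finite G] (α : G →* ℂ)

lemma norm_apply_eq_one (g : G) : ‖α g‖ = 1 :=
  (α.isOfFinOrder (isOfFinOrder_of_finite g)).norm_eq_one

lemma apply_inv_eq_conj (g : G) : α g⁻¹ = conj (α g) := by
  rw [← Complex.inv_eq_conj (α.norm_apply_eq_one g)]
  exact eq_inv_of_mul_eq_one_left (by rw [← map_mul, inv_mul_cancel, map_one])

lemma abs_re_apply_lt_one {g : G} (hg : α (g ^ 2) ≠ 1) : |(α g).re| < 1 := by
  refine (Complex.abs_re_le_norm _).trans_eq (α.norm_apply_eq_one g) |>.lt_of_ne fun h => hg ?_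
  have hreal : α g = (α g).re :=
    Complex.ext rfl (Complex.abs_re_eq_norm.mp (h.trans (α.norm_apply_eq_one g).symm))
  rw [map_pow, hreal, ← Complex.ofReal_pow, ← sq_abs, h]
  simp

lemma exists_lt_one_abs_re_le {K : Subgroup G} (hK : α.ker ≤ K) :
    ∃ δ < 1, ∀ g, g ^ 2 ∉ K → |(α g).re| ≤ δ := by
  classical
  obtain ⟨g₀, hg₀⟩ := Finite.exists_max fun g => if g ^ 2 ∈ K then 0 else |(α g).re|
  refine ⟨_, ?_, fun g hg => (if_neg hg).symm.le.trans (hg₀ g)⟩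
  split_ifs with h
  · exact one_pos
  · exact α.abs_re_apply_lt_one fun h1 => h (hK h1)

variable [Fintype G]

lemma sum_apply_inv_smul_eq_sum_re_smul {M : Type*} [AddCommGroup M] [Module ℂ M]
    (c : G → M) (hc : ∀ g, c g = c g⁻¹) :
    ∑ g, α g⁻¹ • c g = ∑ g, ((α g).re : ℂ) • c g := by
  have hswap : ∑ g, α g • c g = ∑ g, α g⁻¹ • c g :=
    Fintype.sum_equiv (Equiv.inv G) _ _ fun g => by simp [← hc]
  simp_rw [Complex.re_eq_add_conj, ← apply_inv_eq_conj, div_eq_inv_mul, mul_smul,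
    ← Finset.smul_sum, add_smul, sum_add_distrib, hswap, ← two_smul ℂ, smul_smul]
  norm_num

end MonoidHom

lemma tendsto_sum_Icc_atTop_of_not_summable {t : ℕ → ℝ} (ht : ∀ j, 0 ≤ t j)
    (hdiv : ¬ Summable t) (j₀ : ℕ) :
    Tendsto (fun d => ∑ j ∈ Icc j₀ (j₀ + d), t j) atTop atTop := by
  have hshift : Tendsto (fun n => ∑ i ∈ range n, t (i + j₀)) atTop atTop :=
    (not_summable_iff_tendsto_nat_atTop_of_nonneg fun i => ht (i + j₀)).mp
      ((summable_nat_add_iff j₀).not.mpr hdiv)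
  refine (hshift.comp (tendsto_add_atTop_nat 1)).congr fun d => ?_
  rw [Function.comp_apply, ← Ico_add_one_right_eq_Icc, sum_Ico_eq_sum_range]
  simp_rw [add_assoc, Nat.add_sub_cancel_left, add_comm j₀]

lemma tendsto_prod_Icc_zero_of_le_exp_neg {a t : ℕ → ℝ} (ha : ∀ j, 0 ≤ a j)
    (hat : ∀ j, a j ≤ exp (-t j)) (ht : ∀ j, 0 ≤ t j) (hdiv : ¬ Summable t) (j₀ : ℕ) :
    Tendsto (fun d => ∏ j ∈ Icc j₀ (j₀ + d), a j) atTop (nhds 0) := by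
  refine squeeze_zero (fun d => prod_nonneg fun j _ => ha j) (fun d => ?_)
    (tendsto_exp_atBot.comp (tendsto_neg_atTop_atBot.comp
      (tendsto_sum_Icc_atTop_of_not_summable ht hdiv j₀)))
  calc ∏ j ∈ Icc j₀ (j₀ + d), a j ≤ ∏ j ∈ Icc j₀ (j₀ + d), exp (-t j) :=
        prod_le_prod (fun j _ => ha j) fun j _ => hat j
    _ = exp (-∑ j ∈ Icc j₀ (j₀ + d), t j) := by rw [← exp_sum, sum_neg_distrib]

lemma l1C_sum_apply_inv_smul_toC_le {G : Type*} [Group G] [Fintype G] (α : G →* ℂ)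
    (c : G → AddMonoidAlgebra ℝ ℤ) (hpos : ∀ g m, 0 ≤ lcoeff (c g) m)
    (hsum : ∑ g, ev1 (c g) = 1) (hsymm : ∀ g, c g = c g⁻¹) (p : G → Prop) [DecidablePred p]
    {δ : ℝ} (hδ : ∀ g, ¬ p g → |(α g).re| ≤ δ) :
    l1C (∑ g, α g⁻¹ • toC (c g)) ≤ 1 - (1 - δ) * ∑ g, if p g then 0 else ev1 (c g) := by
  have hev : ∀ g, 0 ≤ ev1 (c g) := fun g => ev1_nonneg (hpos g)
  rw [α.sum_apply_inv_smul_eq_sum_re_smul _ fun g => congrArg toC (hsymm g)]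
  calc l1C (∑ g, ((α g).re : ℂ) • toC (c g))
      ≤ ∑ g, |(α g).re| * ev1 (c g) := (l1C_sum_le _ _).trans_eq <| sum_congr rfl fun g _ => by
        rw [l1C_smul, l1C_toC (hpos g), Complex.norm_real, Real.norm_eq_abs]
    _ ≤ ∑ g, (ev1 (c g) - (1 - δ) * if p g then 0 else ev1 (c g)) := sum_le_sum fun g _ => by
        split_ifs with hg
        · simpa using mul_le_of_le_one_left (hev g)
            ((Complex.abs_re_le_norm _).trans_eq (α.norm_apply_eq_one g))
        · linarith [mul_le_mul_of_nonneg_right (hδ g hg) (hev g)]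
    _ = 1 - (1 - δ) * ∑ g, if p g then 0 else ev1 (c g) := by
        rw [sum_sub_distrib, hsum, Finset.mul_sum]

open scoped Classical in
/-- Proposition 2.3 (first assertion): a symmetric sequence (`q_{j,g} = q_{j,g⁻¹}`) of
hemicirculant coefficient families is hollow provided that for every maximal proper
subgroup `K` of `H` the series `∑_j ∑_{g : g² ∉ K} q_{j,g}(1)` diverges. -/
theorem symmetric_hollowness_criterion {H : Type} [CommGroup H] [Fintype H]
    (q : ℕ → H → AddMonoidAlgebra ℝ ℤ)
    (hpos : ∀ j g m, 0 ≤ lcoeff (q j g) m)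
    (hsum : ∀ j, ∑ g, ev1 (q j g) = 1)
    (hsymm : ∀ j g, q j g = q j g⁻¹)
    (hdiv : ∀ K : Subgroup H, IsCoatom K →
      ¬ Summable (fun j => ∑ g, if g ^ 2 ∈ K then 0 else ev1 (q j g))) :
    ∀ α : H →* ℂ, α ≠ 1 → ∀ j₀ : ℕ,
      Tendsto
        (fun d => l1C (∏ j ∈ Finset.Icc j₀ (j₀ + d), ∑ g, α g⁻¹ • toC (q j g)))
        atTop (nhds 0) := by
  intro α hα j₀
  obtain ⟨K, hK, hker⟩ :=
    (eq_top_or_exists_le_coatom α.ker).resolve_left (mt MonoidHom.ker_eq_top_iff.mp hα)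
  obtain ⟨δ, hδ, hre⟩ := α.exists_lt_one_abs_re_le hker
  set s := fun j => ∑ g, if g ^ 2 ∈ K then 0 else ev1 (q j g)
  have hfactor : ∀ j, l1C (∑ g, α g⁻¹ • toC (q j g)) ≤ exp (-((1 - δ) * s j)) := fun j =>
    (l1C_sum_apply_inv_smul_toC_le α (q j) (hpos j) (hsum j) (hsymm j) _ hre).trans
      (one_sub_le_exp_neg _)
  have hs : ∀ j, 0 ≤ (1 - δ) * s j := fun j => mul_nonneg (by linarith) <|
    sum_nonneg fun g _ => ite_nonneg le_rfl (ev1_nonneg (hpos j g))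
  refine squeeze_zero (fun _ => l1C_nonneg _) (fun d => l1C_prod_le _ _)
    (tendsto_prod_Icc_zero_of_le_exp_neg (fun j => l1C_nonneg _) hfactor hs ?_ j₀)
  exact (summable_mul_left_iff (sub_ne_zero.mpr hδ.ne')).not.mpr (hdiv K hK)
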